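/- arXiv:2505.14018 — 2 statements merged into one kernel-verified Lean document; each statement's English description precedes it below -/
import Mathlib

section
/- Let G be a 2-connected graph contractible to a cactus T, and let T_B ⊆ V(T) be the set of vertices of T corresponding to big witness sets (witness sets with at least two vertices). Then the number of vertices t ∈ V(T) that lie on a path between two distinct vertices of T_B and are adjacent to a vertex of T_B is at most 4·|T_B|. -/
/-!
Call a path between two distinct vertices of `T_B` with no inner vertex in `T_B` a link. The
vertex of a singleton witness set `{x}` is not a cut-vertex of `T` because `x` is none of `G`, and
in a cactus such a vertex has at most two neighbours. Hence a counted vertex is the first (if it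
lies in `T_B`) or the second vertex of a link, and a link is determined by its first edge.

It remains to map these first edges injectively into `T_B × Bool × Bool`. Fix a BFS tree of `T`;
on a path of tree edges every vertex but the highest one has its parent edge on the path. So a
link made of tree edges contains the parent edge of one of its endpoints `w`. Otherwise it shares
a non-tree edge with the fundamental cycle of that edge, hence lies on this cycle, whose tree path
contains the parent edge of an endpoint `w`. In both cases `w` and one bit telling the cases apart
determine the link (in the second case because only one cycle passes through the parent edge of
`w`). A last bit records at which end of the link the first edge sits.
-/

open SimpleGraph

universe u v

/-- A cactus: a connected graph in which every edge lies on at most one cycle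
(any two cycles through a common edge have the same edge set). -/
def IsCactus {V : Type u} (G : SimpleGraph V) : Prop :=
  G.Connected ∧ ∀ (e : Sym2 V) (a b : V) (c₁ : G.Walk a a) (c₂ : G.Walk b b),
    c₁.IsCycle → c₂.IsCycle → e ∈ c₁.edges → e ∈ c₂.edges →
    {e' | e' ∈ c₁.edges} = {e' | e' ∈ c₂.edges}

/-- The graph `G/F` obtained by contracting the edges of `F`: its vertices are the
connected components of the subgraph spanned by the edges of `F` that lie in `G`. -/
def contract {V : Type u} (G : SimpleGraph V) (F : Set (Sym2 V)) :
    SimpleGraph (SimpleGraph.fromEdgeSet F ⊓ G).ConnectedComponent where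
  Adj a b := a ≠ b ∧ ∃ x y : V, G.Adj x y ∧
      (SimpleGraph.fromEdgeSet F ⊓ G).connectedComponentMk x = a ∧
      (SimpleGraph.fromEdgeSet F ⊓ G).connectedComponentMk y = b
  symm := ⟨by
    rintro a b ⟨hne, x, y, hadj, hx, hy⟩
    exact ⟨hne.symm, y, x, hadj.symm, hy, hx⟩⟩
  loopless := ⟨by
    rintro a ⟨hne, -⟩
    exact hne rfl⟩

/-- A cut-vertex of `G`: removing it disconnects the graph. -/
def IsCutVertex {V : Type u} (G : SimpleGraph V) (x : V) : Prop :=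
  ¬ (G.induce ({x}ᶜ : Set V)).Connected

/-- 2-connected: connected, at least 3 vertices, no cut-vertex. -/
def TwoConnected {V : Type u} (G : SimpleGraph V) : Prop :=
  G.Connected ∧ 3 ≤ Nat.card V ∧ ∀ x : V, (G.induce ({x}ᶜ : Set V)).Connected

/-- A cable path: a path whose internal vertices are adjacent exactly to their
two neighbours on the path. -/
def IsCablePath {V : Type u} (G : SimpleGraph V) (l : List V) : Prop :=
  l ≠ [] ∧ l.Nodup ∧ l.Chain' G.Adj ∧
  ∀ (i : ℕ) (h2 : i + 1 < l.length) (_h1 : 1 ≤ i) (y : V),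
    G.Adj (l.get ⟨i, by omega⟩) y ↔
      (y = l.get ⟨i - 1, by omega⟩ ∨ y = l.get ⟨i + 1, h2⟩)

/-- `G` is contractible to `H` via `ψ`: preimages are connected witness sets and
`H`-adjacency corresponds to existence of crossing edges of `G`. -/
def IsContraction {V : Type u} {W : Type v} (G : SimpleGraph V) (H : SimpleGraph W)
    (ψ : V → W) : Prop :=
  Function.Surjective ψ ∧
  (∀ t : W, (G.induce (ψ ⁻¹' {t})).Connected) ∧
  (∀ t t' : W, H.Adj t t' ↔ t ≠ t' ∧ ∃ x y : V, G.Adj x y ∧ ψ x = t ∧ ψ y = t')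

/-- The witness set of `t` is big: it contains at least two vertices. -/
def BigWitness {V : Type u} {W : Type v} (ψ : V → W) (t : W) : Prop :=
  ∃ a b : V, a ≠ b ∧ ψ a = t ∧ ψ b = t

/-- A 3-colouring `f` of `V(G)` is compatible with the `T`-witness structure given by `ψ`:
witness sets are monochromatic, adjacent big witness sets get distinct colours, and
endpoints of cable paths in `T` between two big witness sets through singleton witness
sets are coloured differently from their path-neighbours. -/
def Compatible {V : Type u} {W : Type v} (T : SimpleGraph W) (ψ : V → W)
    (f : V → Fin 3) : Prop :=
  (∀ x y : V, ψ x = ψ y → f x = f y) ∧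
  (∀ t t' : W, BigWitness ψ t → BigWitness ψ t' → T.Adj t t' →
    ∀ x y : V, ψ x = t → ψ y = t' → f x ≠ f y) ∧
  (∀ l : List W, IsCablePath T l → ∀ (hlen : 3 ≤ l.length),
    BigWitness ψ (l.get ⟨0, by omega⟩) →
    BigWitness ψ (l.get ⟨l.length - 1, by omega⟩) →
    (∀ (i : ℕ) (h : i < l.length), 1 ≤ i → i < l.length - 1 →
      ¬ BigWitness ψ (l.get ⟨i, h⟩)) →
    ((∀ x y : V, ψ x = l.get ⟨0, by omega⟩ → ψ y = l.get ⟨1, by omega⟩ → f x ≠ f y) ∧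
     (∀ x y : V, ψ x = l.get ⟨l.length - 1, by omega⟩ →
        ψ y = l.get ⟨l.length - 2, by omega⟩ → f x ≠ f y)))

/-- The graph `G - Z`, seen as a graph on all of `V`: edges of `G` avoiding `Z`. -/
def restrictOutside {V : Type u} (G : SimpleGraph V) (Z : Set V) : SimpleGraph V where
  Adj x y := G.Adj x y ∧ x ∉ Z ∧ y ∉ Z
  symm := ⟨by rintro x y ⟨h, hx, hy⟩; exact ⟨h.symm, hy, hx⟩⟩
  loopless := ⟨by rintro x ⟨h, -, -⟩; exact G.irrefl h⟩

/-- `Z` is a core of `G`: every connected component of `G - Z` is an isolated vertex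
or (the vertex set of) a cable path of `G`. -/
def IsCore {V : Type u} (G : SimpleGraph V) (Z : Set V) : Prop :=
  ∀ x ∉ Z, {u | (restrictOutside G Z).Reachable x u} = {x} ∨
    ∃ l : List V, IsCablePath G l ∧
      {u | (restrictOutside G Z).Reachable x u} = {u | u ∈ l}

/-- A connected core. -/
def IsConnectedCore {V : Type u} (G : SimpleGraph V) (Z : Set V) : Prop :=
  (G.induce Z).Connected ∧ IsCore G Z

/-- `B` induces a nonempty connected subgraph without cut-vertices. -/
def NoCutVertexSet {V : Type u} (G : SimpleGraph V) (B : Set V) : Prop :=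
  B.Nonempty ∧ (G.induce B).Connected ∧
  ∀ x ∈ B, (B \ {x}).Nonempty → (G.induce (B \ {x})).Connected

/-- A block of `G`: a maximal set inducing a connected subgraph without cut-vertices. -/
def IsBlock {V : Type u} (G : SimpleGraph V) (B : Set V) : Prop :=
  NoCutVertexSet G B ∧ ∀ B' : Set V, B ⊆ B' → NoCutVertexSet G B' → B = B'

/-- `B` is the vertex set of an induced cycle of `G`. -/
def IsCycleSet {V : Type u} (G : SimpleGraph V) (B : Set V) : Prop :=
  ∃ (a : V) (c : G.Walk a a), c.IsCycle ∧ {x | x ∈ c.support} = B ∧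
    ∀ x ∈ B, ∀ y ∈ B, G.Adj x y → s(x, y) ∈ c.edges

/-- `G` can be turned into a cactus by contracting at most `k` edges. -/
def KContractibleToCactus {V : Type u} (G : SimpleGraph V) (k : ℕ) : Prop :=
  ∃ F : Set (Sym2 V), F ⊆ G.edgeSet ∧ F.ncard ≤ k ∧ IsCactus (contract G F)

/-- `G` has a tree decomposition of width at most `w`. -/
def HasTreewidthAtMost {V : Type u} (G : SimpleGraph V) (w : ℕ) : Prop :=
  ∃ (ι : Type u) (T : SimpleGraph ι) (β : ι → Set V),
    T.Connected ∧ T.IsAcyclic ∧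
    (∀ x : V, ∃ i, x ∈ β i) ∧
    (∀ ⦃x y : V⦄, G.Adj x y → ∃ i, x ∈ β i ∧ y ∈ β i) ∧
    (∀ (x : V) (i j : ι), x ∈ β i → x ∈ β j →
      ∀ p : T.Walk i j, p.IsPath → ∀ z ∈ p.support, x ∈ β z) ∧
    (∀ i, (β i).ncard ≤ w + 1)

theorem Set.ncard_le_ncard_of_forall_subsingleton {α β : Type*} {s : Set α} {t : Set β}
    (r : α → β → Prop) (hs : ∀ a ∈ s, ∃ b ∈ t, r a b)
    (ht : ∀ b ∈ t, {a ∈ s | r a b}.Subsingleton) (htf : t.Finite := by toFinite_tac) :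
    s.ncard ≤ t.ncard := by
  rcases isEmpty_or_nonempty β with hβ | hβ
  · rw [Set.eq_empty_of_forall_notMem fun a ha => (hs a ha).elim fun b _ => hβ.elim b]
    simp
  choose! g hgt hg using hs
  exact Set.ncard_le_ncard_of_injOn g hgt
    (fun a ha a' ha' h => ht _ (hgt a ha) ⟨ha, hg a ha⟩ ⟨ha', h ▸ hg a' ha'⟩) htf

namespace SimpleGraph.Walk

variable {V : Type*} {G : SimpleGraph V}

lemma IsPath.eq_of_mk_mem_edges_cons {u x y z : V} {h : G.Adj u x} {q : G.Walk x y}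
    (hp : (cons h q).IsPath) (he : s(u, z) ∈ (cons h q).edges) : z = x := by
  rw [edges_cons, List.mem_cons] at he
  rcases he with he | he
  · exact Sym2.congr_right.mp he
  · exact absurd (q.fst_mem_support_of_mem_edges he) ((cons_isPath_iff _ _).mp hp).2

lemma IsPath.eq_of_mem_support_takeUntil_of_mem_support_dropUntil [DecidableEq V]
    {u v x w : V} {p : G.Walk u v} (hp : p.IsPath) (hx : x ∈ p.support)
    (h₁ : w ∈ (p.takeUntil x hx).support) (h₂ : w ∈ (p.dropUntil x hx).support) : w = x := by
  have hnodup := hp.support_nodup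
  rw [← p.take_spec hx, support_append] at hnodup
  rw [← (p.dropUntil x hx).cons_tail_support, List.mem_cons] at h₂
  exact h₂.resolve_right (List.disjoint_of_nodup_append hnodup h₁)

lemma mem_support_of_edges_subset {u v u' v' w : V} {p : G.Walk u v} {q : G.Walk u' v'}
    (hp : ¬p.Nil) (h : ∀ e ∈ p.edges, e ∈ q.edges) (hw : w ∈ p.support) : w ∈ q.support := by
  obtain ⟨e, he, hwe⟩ := (mem_support_iff_exists_mem_edges_of_not_nil hp).mp hw
  obtain ⟨z, rfl⟩ := Sym2.mem_iff_exists.mp hwe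
  exact q.fst_mem_support_of_mem_edges (h _ he)

lemma IsPath.cons_concat_isCycle {t a d : V} {p : G.Walk a d} (hp : p.IsPath)
    (ht : t ∉ p.support) (ha : G.Adj t a) (hd : G.Adj d t) (had : a ≠ d) :
    (cons ha (p.concat hd)).IsCycle := by
  refine (cons_isCycle_iff _ _).mpr ⟨hp.concat ht hd, ?_⟩
  rw [edges_concat, List.concat_eq_append, List.mem_append, List.mem_singleton, Sym2.eq_iff]
  rintro (he | ⟨rfl, rfl⟩ | ⟨-, rfl⟩)
  · exact ht (p.fst_mem_support_of_mem_edges he)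
  · exact G.loopless.irrefl _ ha
  · exact had rfl

lemma IsCycle.exists_mk_mem_edges_iff {u x : V} {c : G.Walk u u} (hc : c.IsCycle)
    (hx : x ∈ c.support) : ∃ y z, y ≠ z ∧ ∀ w, s(x, w) ∈ c.edges ↔ w = y ∨ w = z := by
  obtain ⟨y, z, hyz, hN⟩ := Set.ncard_eq_two.mp (hc.ncard_neighborSet_toSubgraph_eq_two hx)
  refine ⟨y, z, hyz, fun w => ?_⟩
  rw [← adj_toSubgraph_iff_mem_edges, ← Subgraph.mem_neighborSet, hN]
  rfl

end SimpleGraph.Walk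

open SimpleGraph.Walk

def DegreeLeTwoOff {W : Type*} (T : SimpleGraph W) (B : Set W) : Prop :=
  ∀ t ∉ B, ∀ a b c : W, T.Adj t a → T.Adj t b → T.Adj t c → a = b ∨ a = c ∨ b = c

/-- Paths avoiding `t` from `a` to `b` and from `a` to `c` close two cycles through the edge `ta`;
the cactus property makes their edge sets equal, which forces `c = b`. -/
lemma IsCactus.eq_or_eq_or_eq_of_adj {W : Type*} {T : SimpleGraph W} (hT : IsCactus T) {t : W}
    (havoid : ∀ a b, a ≠ t → b ≠ t → ∃ p : T.Walk a b, t ∉ p.support)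
    {a b c : W} (ha : T.Adj t a) (hb : T.Adj t b) (hc : T.Adj t c) : a = b ∨ a = c ∨ b = c := by
  classical
  by_contra! hne
  obtain ⟨hab, hac, hbc⟩ := hne
  have cycle : ∀ d, T.Adj t d → a ≠ d → ∃ p : T.Walk a d, t ∉ p.support ∧
      ∃ hd : T.Adj d t, (cons ha (p.concat hd)).IsCycle := by
    intro d hd had
    obtain ⟨p, hp⟩ := havoid a d ha.ne' hd.ne'
    have ht : t ∉ p.bypass.support := fun h => hp (p.support_bypass_subset_support h)
    exact ⟨p.bypass, ht, hd.symm, p.bypass_isPath.cons_concat_isCycle ht ha hd.symm had⟩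
  obtain ⟨p, htp, hbt, hcyc⟩ := cycle b hb hab
  obtain ⟨p', -, hct, hcyc'⟩ := cycle c hc hac
  have hsame := hT.2 s(t, a) t t _ _ hcyc hcyc' (by simp) (by simp)
  have hmem : s(c, t) ∈ (cons ha (p.concat hbt)).edges :=
    (Set.ext_iff.mp hsame _).mpr (by simp [edges_concat])
  simp only [edges_cons, edges_concat, List.concat_eq_append, List.mem_cons, List.mem_append,
    List.not_mem_nil, or_false, Sym2.eq_iff] at hmem
  rcases hmem with (⟨hct, -⟩ | ⟨rfl, -⟩) | he | (⟨rfl, -⟩ | ⟨hct, -⟩)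
  · exact hc.ne hct.symm
  · exact hac rfl
  · exact htp (p.snd_mem_support_of_mem_edges he)
  · exact hbc rfl
  · exact hc.ne hct.symm

lemma IsContraction.exists_walk_support_subset_image {V W : Type*} {G : SimpleGraph V}
    {T : SimpleGraph W} {ψ : V → W} (hψ : IsContraction G T ψ) {a b : V} (p : G.Walk a b) :
    ∃ q : T.Walk (ψ a) (ψ b), ∀ z ∈ q.support, ∃ x ∈ p.support, ψ x = z := by
  induction p with
  | nil => exact ⟨nil, by simp⟩
  | @cons a a' b h p ih =>
    obtain ⟨q, hq⟩ := ih
    have hsub : ∀ z ∈ q.support, ∃ x ∈ (cons h p).support, ψ x = z := fun z hz => by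
      obtain ⟨x, hx, rfl⟩ := hq z hz
      exact ⟨x, List.mem_cons_of_mem _ hx, rfl⟩
    by_cases hψa : ψ a = ψ a'
    · exact ⟨q.copy hψa.symm rfl, by simpa using hsub⟩
    · refine ⟨cons ((hψ.2.2 _ _).mpr ⟨hψa, a, a', h, rfl, rfl⟩) q, ?_⟩
      rw [support_cons, List.forall_mem_cons]
      exact ⟨⟨a, List.mem_cons_self, rfl⟩, hsub⟩

/-- A singleton witness set `{x}` of `t` makes `T - t` connected, because `G - x` is. -/
lemma degreeLeTwoOff_bigWitness {V W : Type*} {G : SimpleGraph V} {T : SimpleGraph W}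
    (hG : TwoConnected G) (hT : IsCactus T) {ψ : V → W} (hψ : IsContraction G T ψ) :
    DegreeLeTwoOff T {t | BigWitness ψ t} := by
  intro t ht
  obtain ⟨x, hx⟩ := hψ.1 t
  have hfiber : ∀ y, ψ y = t → y = x := fun y hy => by
    by_contra hyx
    exact ht ⟨y, x, hyx, hy, hx⟩
  refine fun a b c => hT.eq_or_eq_or_eq_of_adj (fun a b ha hb => ?_)
  obtain ⟨a', rfl⟩ := hψ.1 a
  obtain ⟨b', rfl⟩ := hψ.1 b
  have ha' : a' ∈ ({x}ᶜ : Set V) := fun h => ha (by rw [Set.mem_singleton_iff.mp h, hx])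
  have hb' : b' ∈ ({x}ᶜ : Set V) := fun h => hb (by rw [Set.mem_singleton_iff.mp h, hx])
  obtain ⟨p⟩ := (hG.2.2 x).preconnected ⟨a', ha'⟩ ⟨b', hb'⟩
  obtain ⟨q, hq⟩ := hψ.exists_walk_support_subset_image (p.map (Embedding.induce _).toHom)
  refine ⟨q, fun htq => ?_⟩
  obtain ⟨y, hy, hyt⟩ := hq t htq
  simp only [Walk.support_map, List.mem_map] at hy
  obtain ⟨⟨y, hyx⟩, -, rfl⟩ := hy
  exact hyx (hfiber y hyt)

namespace CactusLinks

variable {W : Type*} {T : SimpleGraph W} {B : Set W}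

structure IsLink (B : Set W) {x y : W} (θ : T.Walk x y) : Prop where
  isPath : θ.IsPath
  ne : x ≠ y
  start_mem : x ∈ B
  end_mem : y ∈ B
  not_mem : ∀ w ∈ θ.support, w ≠ x → w ≠ y → w ∉ B

lemma IsLink.reverse {x y : W} {θ : T.Walk x y} (l : IsLink B θ) : IsLink B θ.reverse where
  isPath := l.isPath.reverse
  ne := l.ne.symm
  start_mem := l.end_mem
  end_mem := l.start_mem
  not_mem w hw hwy hwx := l.not_mem w (by simpa using hw) hwx hwy

lemma IsLink.eq_or_eq_of_mem {x y w : W} {θ : T.Walk x y} (l : IsLink B θ)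
    (hw : w ∈ θ.support) (hwB : w ∈ B) : w = x ∨ w = y := by
  by_contra! h
  exact l.not_mem w hw h.1 h.2 hwB

lemma IsLink.exists_cons_of_eq_or_eq {x y w : W} {θ : T.Walk x y} (l : IsLink B θ)
    (hw : w = x ∨ w = y) : ∃ (z f : W) (h : T.Adj w z) (q : T.Walk z f),
      IsLink B (cons h q) ∧ ∀ e, e ∈ (cons h q).edges ↔ e ∈ θ.edges := by
  have key : ∀ {x y : W} (θ : T.Walk x y), IsLink B θ → ∃ (z f : W) (h : T.Adj x z)
      (q : T.Walk z f), IsLink B (cons h q) ∧ ∀ e, e ∈ (cons h q).edges ↔ e ∈ θ.edges := by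
    intro x y θ l
    obtain ⟨z, h, q, rfl⟩ := not_nil_iff.mp (not_nil_of_ne (p := θ) l.ne)
    exact ⟨z, y, h, q, l, fun _ => Iff.rfl⟩
  rcases hw with rfl | rfl
  · exact key θ l
  · obtain ⟨z, f, h, q, l', he⟩ := key θ.reverse l.reverse
    exact ⟨z, f, h, q, l', fun e => (he e).trans (by simp)⟩

lemma exists_walk_to_first_mem {t u : W} (p : T.Walk t u) (hu : u ∈ B) :
    ∃ f ∈ B, ∃ q : T.Walk t f, (∀ w ∈ q.support, w ≠ f → w ∉ B) ∧
      ∀ w ∈ q.support, w ∈ p.support := by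
  induction p with
  | nil => exact ⟨_, hu, nil, by simp⟩
  | @cons t y u h p ih =>
    by_cases ht : t ∈ B
    · exact ⟨t, ht, nil, by simp⟩
    obtain ⟨f, hf, q, hqB, hqp⟩ := ih hu
    refine ⟨f, hf, cons h q, ?_, ?_⟩
    · intro w hw hwf
      rw [support_cons, List.mem_cons] at hw
      rcases hw with rfl | hw
      · exact ht
      · exact hqB w hw hwf
    · intro w hw
      rw [support_cons, List.mem_cons] at hw ⊢
      exact hw.imp_right (hqp w)

lemma exists_isLink_cons {b t u : W} (hb : b ∈ B) (hbt : T.Adj b t) (p : T.Walk t u)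
    (hu : u ∈ B) (hbp : b ∉ p.support) : ∃ f, ∃ q : T.Walk t f, IsLink B (cons hbt q) := by
  classical
  obtain ⟨f, hf, q, hqB, hqp⟩ := exists_walk_to_first_mem p hu
  have hbq : b ∉ q.bypass.support := fun h => hbp (hqp _ (q.support_bypass_subset_support h))
  refine ⟨f, q.bypass, ⟨(cons_isPath_iff _ _).mpr ⟨q.bypass_isPath, hbq⟩,
    fun h => hbq (by rw [h]; exact q.bypass.end_mem_support), hb, hf, ?_⟩⟩
  intro w hw hwb hwf
  rw [support_cons, List.mem_cons] at hw
  exact hqB w (q.support_bypass_subset_support (hw.resolve_left hwb)) hwf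

/-- `b` must be one of the two path-neighbours of `t`; the half of the path not containing `b`
extends `b t` to a link. -/
lemma exists_isLink_cons_of_mem_path (hB : DegreeLeTwoOff T B) {t t₁ t₂ b : W} (ht : t ∉ B)
    (ht₁ : t₁ ∈ B) (ht₂ : t₂ ∈ B) {p : T.Walk t₁ t₂} (hp : p.IsPath) (htp : t ∈ p.support)
    (hb : b ∈ B) (hbt : T.Adj b t) : ∃ f, ∃ q : T.Walk t f, IsLink B (cons hbt q) := by
  classical
  set p₁ := (p.takeUntil t htp).reverse
  set p₂ := p.dropUntil t htp
  have hmeet : ∀ w ∈ p₁.support, w ∈ p₂.support → w = t := fun w h₁ h₂ =>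
    hp.eq_of_mem_support_takeUntil_of_mem_support_dropUntil htp (by simpa [p₁] using h₁) h₂
  obtain ⟨y₁, h₁, q₁, hq₁⟩ :=
    not_nil_iff.mp (not_nil_of_ne (p := p₁) fun h => ht (h ▸ ht₁))
  obtain ⟨y₂, h₂, q₂, hq₂⟩ :=
    not_nil_iff.mp (not_nil_of_ne (p := p₂) fun h => ht (h ▸ ht₂))
  have hy₁ : y₁ ∈ p₁.support := by rw [hq₁]; simp
  have hy₂ : y₂ ∈ p₂.support := by rw [hq₂]; simp
  rcases hB t ht y₁ y₂ b h₁ h₂ hbt.symm with h | h | h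
  · exact absurd (hmeet y₁ hy₁ (h ▸ hy₂)) h₁.ne'
  · exact exists_isLink_cons hb hbt p₂ ht₂ fun hb₂ => hbt.ne (hmeet b (h ▸ hy₁) hb₂)
  · exact exists_isLink_cons hb hbt p₁ ht₁ fun hb₁ => hbt.ne (hmeet b hb₁ (h ▸ hy₂))

/-- Inner vertices have no neighbours off the path, so a link is determined by its first edge. -/
lemma edges_eq_of_forall_not_mem (hB : DegreeLeTwoOff T B) {u x f₁ f₂ : W} (hux : T.Adj u x)
    (q₁ : T.Walk x f₁) (q₂ : T.Walk x f₂) (hp₁ : q₁.IsPath) (hp₂ : q₂.IsPath)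
    (hu₁ : u ∉ q₁.support) (hu₂ : u ∉ q₂.support) (hf₁ : f₁ ∈ B) (hf₂ : f₂ ∈ B)
    (hq₁ : ∀ w ∈ q₁.support, w ≠ f₁ → w ∉ B) (hq₂ : ∀ w ∈ q₂.support, w ≠ f₂ → w ∉ B) :
    q₁.edges = q₂.edges := by
  induction q₁ generalizing u with
  | @nil x =>
    obtain rfl : x = f₂ := by
      by_contra h
      exact hq₂ x q₂.start_mem_support h hf₁
    rw [eq_nil_iff_nil.mpr (isPath_iff_nil.mp hp₂)]
  | @cons x y₁ f₁ h₁ q₁ ih =>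
    have hx : x ∉ B := hq₁ x (start_mem_support _) fun h =>
      ((cons_isPath_iff _ _).mp hp₁).2 (h ▸ q₁.end_mem_support)
    cases q₂ with
    | nil => exact absurd hf₂ hx
    | @cons _ y₂ _ h₂ q₂ =>
      obtain rfl : y₁ = y₂ := by
        rcases hB x hx y₁ y₂ u h₁ h₂ hux.symm with h | rfl | rfl
        · exact h
        · exact absurd (List.mem_cons_of_mem _ q₁.start_mem_support) hu₁
        · exact absurd (List.mem_cons_of_mem _ q₂.start_mem_support) hu₂
      rw [edges_cons, edges_cons, ih (hux := h₁) (q₂ := q₂) (hp₁ := hp₁.of_cons)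
        (hp₂ := hp₂.of_cons) (hu₁ := ((cons_isPath_iff _ _).mp hp₁).2)
        (hu₂ := ((cons_isPath_iff _ _).mp hp₂).2) (hf₁ := hf₁)
        (hq₁ := fun w hw => hq₁ w (List.mem_cons_of_mem _ hw))
        (hq₂ := fun w hw => hq₂ w (List.mem_cons_of_mem _ hw))]

lemma IsLink.cons_edges_eq (hB : DegreeLeTwoOff T B) {v x f₁ f₂ : W} {h₁ h₂ : T.Adj v x}
    {q₁ : T.Walk x f₁} {q₂ : T.Walk x f₂} (l₁ : IsLink B (cons h₁ q₁))
    (l₂ : IsLink B (cons h₂ q₂)) : (cons h₁ q₁).edges = (cons h₂ q₂).edges := by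
  have hv₁ := ((cons_isPath_iff _ _).mp l₁.isPath).2
  have hv₂ := ((cons_isPath_iff _ _).mp l₂.isPath).2
  rw [edges_cons, edges_cons, edges_eq_of_forall_not_mem hB h₁ q₁ q₂ l₁.isPath.of_cons
    l₂.isPath.of_cons hv₁ hv₂ l₁.end_mem l₂.end_mem
    (fun w hw => l₁.not_mem w (List.mem_cons_of_mem _ hw) fun h => hv₁ (h ▸ hw))
    (fun w hw => l₂.not_mem w (List.mem_cons_of_mem _ hw) fun h => hv₂ (h ▸ hw))]

lemma mk_mem_edges_of_adj (hB : DegreeLeTwoOff T B) {a x y : W} {c : T.Walk a a}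
    (hc : c.IsCycle) (hx : x ∈ c.support) (hxB : x ∉ B) (hxy : T.Adj x y) :
    s(x, y) ∈ c.edges := by
  obtain ⟨y', z', hne, hiff⟩ := hc.exists_mk_mem_edges_iff hx
  have h₁ := (hiff y').mpr (Or.inl rfl)
  have h₂ := (hiff z').mpr (Or.inr rfl)
  rcases hB x hxB y' z' y (c.adj_of_mem_edges h₁) (c.adj_of_mem_edges h₂) hxy with h | h | h
  · exact absurd h hne
  · exact h ▸ h₁
  · exact h ▸ h₂

lemma edges_subset_of_start_mem_support (hB : DegreeLeTwoOff T B) {a x f : W}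
    {c : T.Walk a a} (hc : c.IsCycle) (q : T.Walk x f) (hq : q.IsPath)
    (hqB : ∀ w ∈ q.support, w ≠ f → w ∉ B) (hx : x ∈ c.support) :
    ∀ e ∈ q.edges, e ∈ c.edges := by
  induction q with
  | nil => simp
  | @cons x y f h q ih =>
    have hxf : x ≠ f := fun hxf => ((cons_isPath_iff _ _).mp hq).2 (hxf ▸ q.end_mem_support)
    have hxy := mk_mem_edges_of_adj hB hc hx (hqB x (start_mem_support _) hxf) h
    rw [edges_cons, List.forall_mem_cons]
    exact ⟨hxy, ih hq.of_cons (fun w hw => hqB w (List.mem_cons_of_mem _ hw))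
      (c.snd_mem_support_of_mem_edges hxy)⟩

lemma edges_subset_of_mem_edges (hB : DegreeLeTwoOff T B) {a v f : W} {c : T.Walk a a}
    (hc : c.IsCycle) (θ : T.Walk v f) (hθ : θ.IsPath)
    (hθB : ∀ w ∈ θ.support, w ≠ v → w ≠ f → w ∉ B) {g : Sym2 W} (hg : g ∈ θ.edges)
    (hgc : g ∈ c.edges) : ∀ e ∈ θ.edges, e ∈ c.edges := by
  induction θ with
  | nil => simp at hg
  | @cons v x f h θ ih =>
    have hvθ : v ∉ θ.support := ((cons_isPath_iff _ _).mp hθ).2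
    by_cases hxf : x = f
    · subst hxf
      rw [eq_nil_iff_nil.mpr (isPath_iff_nil.mp hθ.of_cons)] at hg ⊢
      simp only [edges_cons, edges_nil, List.mem_singleton, forall_eq] at hg ⊢
      exact hg ▸ hgc
    have hxB : x ∉ B := hθB x (List.mem_cons_of_mem _ θ.start_mem_support) h.ne' hxf
    have hθB' : ∀ w ∈ θ.support, w ≠ f → w ∉ B := fun w hw hwf =>
      hθB w (List.mem_cons_of_mem _ hw) (fun hwv => hvθ (hwv ▸ hw)) hwf
    have hx : x ∈ c.support := by
      rw [edges_cons, List.mem_cons] at hg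
      rcases hg with rfl | hg
      · exact c.snd_mem_support_of_mem_edges hgc
      · exact mem_support_of_edges_subset (not_nil_of_ne hxf)
          (ih hθ.of_cons (fun w hw _ => hθB' w hw) hg) θ.start_mem_support
    rw [edges_cons, List.forall_mem_cons, Sym2.eq_swap]
    exact ⟨mk_mem_edges_of_adj hB hc hx hxB h.symm,
      edges_subset_of_start_mem_support hB hc θ hθ.of_cons hθB' hx⟩


variable {r : W} {pa : W → W}

def IsParentMap (T : SimpleGraph W) (r : W) (pa : W → W) : Prop :=
  ∀ v, v ≠ r → T.Adj v (pa v) ∧ T.dist (pa v) r < T.dist v r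

def treeEdges (r : W) (pa : W → W) : Set (Sym2 W) :=
  {e | ∃ z, z ≠ r ∧ e = s(z, pa z)}

lemma exists_isParentMap (hT : T.Connected) (r : W) : ∃ pa, IsParentMap T r pa := by
  have : ∀ v, ∃ u, v ≠ r → T.Adj v u ∧ T.dist u r < T.dist v r := by
    intro v
    by_cases hv : v = r
    · exact ⟨v, fun h => absurd hv h⟩
    obtain ⟨p, hp⟩ := hT.exists_walk_length_eq_dist v r
    obtain ⟨u, h, q, rfl⟩ := not_nil_iff.mp (not_nil_of_ne (p := p) hv)
    refine ⟨u, fun _ => ⟨h, ?_⟩⟩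
    have := T.dist_le q
    rw [length_cons] at hp
    omega
  choose pa hpa using this
  exact ⟨pa, hpa⟩

lemma IsParentMap.exists_walk_to_root (hpa : IsParentMap T r pa) (v : W) :
    ∃ p : T.Walk v r, ∀ e ∈ p.edges, e ∈ treeEdges r pa := by
  induction h : T.dist v r using Nat.strong_induction_on generalizing v with
  | _ n ih =>
    by_cases hv : v = r
    · subst hv
      exact ⟨nil, by simp⟩
    obtain ⟨hadj, hlt⟩ := hpa v hv
    obtain ⟨p, hp⟩ := ih _ (h ▸ hlt) (pa v) rfl
    refine ⟨cons hadj p, ?_⟩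
    rw [edges_cons, List.forall_mem_cons]
    exact ⟨⟨v, hv, rfl⟩, hp⟩

lemma IsParentMap.exists_isCycle (hpa : IsParentMap T r pa) {x y : W} (hxy : T.Adj x y)
    (hg : s(x, y) ∉ treeEdges r pa) : ∃ π : T.Walk y x, π.IsPath ∧
      (∀ e ∈ π.edges, e ∈ treeEdges r pa) ∧ (cons hxy π).IsCycle := by
  classical
  obtain ⟨p, hp⟩ := hpa.exists_walk_to_root y
  obtain ⟨p', hp'⟩ := hpa.exists_walk_to_root x
  have hπ : ∀ e ∈ (p.append p'.reverse).bypass.edges, e ∈ treeEdges r pa := fun e he => by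
    have := (p.append p'.reverse).edges_bypass_subset_edges he
    simp only [edges_append, edges_reverse, List.mem_append, List.mem_reverse] at this
    exact this.elim (hp e) (hp' e)
  exact ⟨_, bypass_isPath _, hπ,
    (cons_isCycle_iff _ _).mpr ⟨bypass_isPath _, fun h => hg (hπ _ h)⟩⟩

lemma eq_or_eq_of_mk_mem_treeEdges {x y : W} (h : s(x, y) ∈ treeEdges r pa) :
    y = pa x ∨ x = pa y := by
  obtain ⟨z, -, hz⟩ := h
  rcases Sym2.eq_iff.mp hz with ⟨rfl, rfl⟩ | ⟨rfl, rfl⟩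
  · exact Or.inl rfl
  · exact Or.inr rfl

/-- Along a path of tree edges, once an edge leads away from the root, so do all later ones. -/
lemma mk_parent_mem_edges_of_parent_eq {a x b : W} (h : T.Adj a x) (q : T.Walk x b)
    (hp : (cons h q).IsPath) (hq : ∀ e ∈ q.edges, e ∈ treeEdges r pa) (hx : pa x = a) :
    ∀ w ∈ q.support, s(w, pa w) ∈ (cons h q).edges := by
  induction q generalizing a with
  | nil =>
    intro w hw
    rw [support_nil, List.mem_singleton] at hw
    rw [hw, hx, Sym2.eq_swap, edges_cons]
    exact List.mem_cons_self
  | @cons x y b h' q ih =>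
    rw [edges_cons, List.forall_mem_cons] at hq
    have hy : x = pa y := by
      refine (eq_or_eq_of_mk_mem_treeEdges hq.1).resolve_left fun hy => ?_
      refine ((cons_isPath_iff _ _).mp hp).2 ?_
      rw [← hx, ← hy]
      exact List.mem_cons_of_mem _ (start_mem_support _)
    rw [support_cons, List.forall_mem_cons]
    refine ⟨by rw [hx, Sym2.eq_swap, edges_cons]; exact List.mem_cons_self, fun w hw => ?_⟩
    exact List.mem_cons_of_mem _ (ih h' hp.of_cons hq.2 hy.symm w hw)

lemma exists_forall_mk_parent_mem_edges {a b : W} (π : T.Walk a b) (hπ : π.IsPath)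
    (hπt : ∀ e ∈ π.edges, e ∈ treeEdges r pa) :
    ∃ w₀, ∀ w ∈ π.support, w ≠ w₀ → s(w, pa w) ∈ π.edges := by
  induction π with
  | @nil a => exact ⟨a, fun w hw hne => absurd (List.mem_singleton.mp hw) hne⟩
  | @cons a x b h π ih =>
    rw [edges_cons, List.forall_mem_cons] at hπt
    rcases eq_or_eq_of_mk_mem_treeEdges hπt.1 with hx | ha
    · obtain ⟨w₀, hw₀⟩ := ih hπ.of_cons hπt.2
      refine ⟨w₀, fun w hw hne => ?_⟩
      rcases List.mem_cons.mp hw with rfl | hw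
      · rw [← hx, edges_cons]
        exact List.mem_cons_self
      · exact List.mem_cons_of_mem _ (hw₀ w hw hne)
    · exact ⟨a, fun w hw hne => mk_parent_mem_edges_of_parent_eq h π hπ hπt.2 ha.symm w
        ((List.mem_cons.mp hw).resolve_left hne)⟩

lemma exists_mk_parent_mem_edges {a b v f : W} (π : T.Walk a b) (hπ : π.IsPath)
    (hπt : ∀ e ∈ π.edges, e ∈ treeEdges r pa) (hv : v ∈ π.support) (hf : f ∈ π.support)
    (hvf : v ≠ f) : ∃ w, (w = v ∨ w = f) ∧ s(w, pa w) ∈ π.edges := by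
  obtain ⟨w₀, hw₀⟩ := exists_forall_mk_parent_mem_edges π hπ hπt
  by_cases hv₀ : v = w₀
  · exact ⟨f, Or.inr rfl, hw₀ f hf fun h => hvf (hv₀.trans h.symm)⟩
  · exact ⟨v, Or.inl rfl, hw₀ v hv hv₀⟩

/-- `ph = true`: `θ` contains the edge from `w` to its parent; `ph = false`: `θ` avoids that edge
but lies on a cycle through it. In both cases the cactus `T` recovers `θ` from `(w, ph)`. -/
def Charged (pa : W → W) {v f : W} (θ : T.Walk v f) (w : W) (ph : Bool) : Prop :=
  (w = v ∨ w = f) ∧ cond ph (s(w, pa w) ∈ θ.edges)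
    (∃ (a : W) (c : T.Walk a a), c.IsCycle ∧ (∀ e ∈ θ.edges, e ∈ c.edges) ∧
      s(w, pa w) ∈ c.edges ∧ s(w, pa w) ∉ θ.edges)

lemma exists_charged (hB : DegreeLeTwoOff T B) (hpa : IsParentMap T r pa) {v f : W}
    {θ : T.Walk v f} (l : IsLink B θ) : ∃ w ph, Charged pa θ w ph := by
  by_cases hθ : ∀ e ∈ θ.edges, e ∈ treeEdges r pa
  · obtain ⟨w, hw, hwθ⟩ := exists_mk_parent_mem_edges θ l.isPath hθ θ.start_mem_support
      θ.end_mem_support l.ne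
    exact ⟨w, true, hw, hwθ⟩
  push Not at hθ
  obtain ⟨g, hgθ, hg⟩ := hθ
  induction g using Sym2.ind with
  | _ x y =>
  obtain ⟨π, hπ, hπt, hc⟩ := hpa.exists_isCycle (θ.adj_of_mem_edges hgθ) hg
  have hθc := edges_subset_of_mem_edges hB hc θ l.isPath l.not_mem hgθ List.mem_cons_self
  have hsupp : ∀ w ∈ θ.support, w ∈ π.support := fun w hw => by
    have := mem_support_of_edges_subset (not_nil_of_ne l.ne) hθc hw
    rw [support_cons, List.mem_cons] at this
    exact this.elim (fun h => h ▸ π.end_mem_support) id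
  obtain ⟨w, hw, hwπ⟩ := exists_mk_parent_mem_edges π hπ hπt (hsupp v θ.start_mem_support)
    (hsupp f θ.end_mem_support) l.ne
  by_cases hwθ : s(w, pa w) ∈ θ.edges
  · exact ⟨w, true, hw, hwθ⟩
  · exact ⟨w, false, hw, x, _, hc, hθc, List.mem_cons_of_mem _ hwπ, hwθ⟩

lemma Charged.edges_iff (hT : IsCactus T) (hB : DegreeLeTwoOff T B) {v₁ f₁ v₂ f₂ w : W}
    {ph : Bool} {θ₁ : T.Walk v₁ f₁} {θ₂ : T.Walk v₂ f₂} (c₁ : Charged pa θ₁ w ph)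
    (c₂ : Charged pa θ₂ w ph) (l₁ : IsLink B θ₁) (l₂ : IsLink B θ₂) :
    ∀ e, e ∈ θ₁.edges ↔ e ∈ θ₂.edges := by
  obtain ⟨z₁, g₁, h₁, q₁, l₁', he₁⟩ := l₁.exists_cons_of_eq_or_eq c₁.1
  obtain ⟨z₂, g₂, h₂, q₂, l₂', he₂⟩ := l₂.exists_cons_of_eq_or_eq c₂.1
  suffices hz : z₁ = z₂ by
    subst hz
    intro e
    rw [← he₁, ← he₂, l₁'.cons_edges_eq hB l₂']
  cases ph with
  | true =>
    have hz₁ := l₁'.isPath.eq_of_mk_mem_edges_cons ((he₁ _).mpr c₁.2)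
    have hz₂ := l₂'.isPath.eq_of_mk_mem_edges_cons ((he₂ _).mpr c₂.2)
    exact hz₁.symm.trans hz₂
  | false =>
    obtain ⟨-, a₁, C₁, hC₁, hθC₁, hpC₁, hpθ₁⟩ := c₁
    obtain ⟨-, a₂, C₂, hC₂, hθC₂, hpC₂, hpθ₂⟩ := c₂
    have hsame := hT.2 _ _ _ C₁ C₂ hC₁ hC₂ hpC₁ hpC₂
    have hz₁ : s(w, z₁) ∈ C₁.edges := hθC₁ _ ((he₁ _).mp List.mem_cons_self)
    have hz₂ : s(w, z₂) ∈ C₁.edges :=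
      (Set.ext_iff.mp hsame _).mpr (hθC₂ _ ((he₂ _).mp List.mem_cons_self))
    have hne₁ : z₁ ≠ pa w := fun h => hpθ₁ ((he₁ _).mp (h ▸ List.mem_cons_self))
    have hne₂ : z₂ ≠ pa w := fun h => hpθ₂ ((he₂ _).mp (h ▸ List.mem_cons_self))
    obtain ⟨y, z, hyz, hiff⟩ :=
      hC₁.exists_mk_mem_edges_iff (C₁.fst_mem_support_of_mem_edges hpC₁)
    have := (hiff _).mp hpC₁
    have := (hiff _).mp hz₁
    have := (hiff _).mp hz₂
    grind

lemma eq_of_charged (hT : IsCactus T) (hB : DegreeLeTwoOff T B) {v₁ x₁ f₁ v₂ x₂ f₂ w : W}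
    {ph : Bool} {h₁ : T.Adj v₁ x₁} {h₂ : T.Adj v₂ x₂} {q₁ : T.Walk x₁ f₁} {q₂ : T.Walk x₂ f₂}
    (l₁ : IsLink B (cons h₁ q₁)) (l₂ : IsLink B (cons h₂ q₂))
    (c₁ : Charged pa (cons h₁ q₁) w ph) (c₂ : Charged pa (cons h₂ q₂) w ph)
    (hw : v₁ = w ↔ v₂ = w) : v₁ = v₂ ∧ x₁ = x₂ := by
  have hfirst : s(v₂, x₂) ∈ (cons h₁ q₁).edges :=
    (c₁.edges_iff hT hB c₂ l₁ l₂ _).mpr List.mem_cons_self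
  obtain rfl : v₂ = v₁ := by
    rcases l₁.eq_or_eq_of_mem ((cons h₁ q₁).fst_mem_support_of_mem_edges hfirst) l₂.start_mem
      with h | h
    · exact h
    rcases c₁.1 with hw₁ | hw₁
    · exact (hw.mp hw₁.symm).trans hw₁
    · have h' : v₂ = w := h.trans hw₁.symm
      exact h'.trans (hw.mpr h').symm
  exact ⟨rfl, (l₁.isPath.eq_of_mk_mem_edges_cons hfirst).symm⟩

def linkDarts (T : SimpleGraph W) (B : Set W) : Set (W × W) :=
  {d | ∃ (f : W) (h : T.Adj d.1 d.2) (q : T.Walk d.2 f), IsLink B (cons h q)}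

lemma ncard_le_ncard_linkDarts [Finite W] (hB : DegreeLeTwoOff T B) :
    {t | (∃ t₁ t₂, t₁ ∈ B ∧ t₂ ∈ B ∧ t₁ ≠ t₂ ∧ ∃ p : T.Walk t₁ t₂, p.IsPath ∧ t ∈ p.support) ∧
      ∃ t' ∈ B, T.Adj t t'}.ncard ≤ (linkDarts T B).ncard := by
  classical
  -- a vertex in `B` starts a one-edge link, a vertex outside `B` is the second vertex of a link
  refine Set.ncard_le_ncard_of_forall_subsingleton
    (fun t d => t = if d.2 ∈ B then d.1 else d.2) ?_
    fun d _ t₁ ⟨_, h₁⟩ t₂ ⟨_, h₂⟩ => h₁.trans h₂.symm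
  rintro t ⟨⟨t₁, t₂, ht₁, ht₂, -, p, hp, htp⟩, t', ht', htt'⟩
  by_cases ht : t ∈ B
  · obtain ⟨f, q, l⟩ := exists_isLink_cons ht htt' nil ht' (by simpa using htt'.ne)
    exact ⟨(t, t'), ⟨f, htt', q, l⟩, (if_pos ht').symm⟩
  · obtain ⟨f, q, l⟩ := exists_isLink_cons_of_mem_path hB ht ht₁ ht₂ hp htp ht' htt'.symm
    exact ⟨(t', t), ⟨f, htt'.symm, q, l⟩, (if_neg ht).symm⟩

lemma ncard_linkDarts_le [Finite W] (hT : IsCactus T) (hB : DegreeLeTwoOff T B) :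
    (linkDarts T B).ncard ≤ 4 * B.ncard := by
  classical
  obtain ⟨r⟩ := hT.1.nonempty
  obtain ⟨pa, hpa⟩ := exists_isParentMap hT.1 r
  calc (linkDarts T B).ncard ≤ (B ×ˢ (Set.univ : Set (Bool × Bool))).ncard := by
        -- a dart goes to the charge of its link and to whether it starts at the charged endpoint
        refine Set.ncard_le_ncard_of_forall_subsingleton (fun d z => ∃ (f : W)
          (h : T.Adj d.1 d.2) (q : T.Walk d.2 f), IsLink B (cons h q) ∧
            Charged pa (cons h q) z.1 z.2.1 ∧ (z.2.2 = true ↔ d.1 = z.1)) ?_ ?_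
        · rintro ⟨v, x⟩ ⟨f, h, q, l⟩
          obtain ⟨w, ph, hc⟩ := exists_charged hB hpa l
          have hwB : w ∈ B := hc.1.elim (· ▸ l.start_mem) (· ▸ l.end_mem)
          exact ⟨(w, ph, decide (v = w)), ⟨hwB, trivial⟩, f, h, q, l, hc, by simp⟩
        · rintro ⟨w, ph, o⟩ - ⟨v₁, x₁⟩ ⟨-, f₁, h₁, q₁, l₁, c₁, o₁⟩ ⟨v₂, x₂⟩
            ⟨-, f₂, h₂, q₂, l₂, c₂, o₂⟩
          obtain ⟨rfl, rfl⟩ := eq_of_charged hT hB l₁ l₂ c₁ c₂ (o₁.symm.trans o₂)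
          rfl
    _ = 4 * B.ncard := by
        rw [Set.ncard_prod, Set.ncard_univ, Nat.card_eq_fintype_card]
        simp [mul_comm]

end CactusLinks

theorem stmt5_general {V : Type u} {W : Type v} [Fintype W]
    (G : SimpleGraph V) (T : SimpleGraph W) (hG : TwoConnected G) (hT : IsCactus T)
    (ψ : V → W) (hψ : IsContraction G T ψ) :
    {t : W | (∃ t₁ t₂ : W, BigWitness ψ t₁ ∧ BigWitness ψ t₂ ∧ t₁ ≠ t₂ ∧
        ∃ p : T.Walk t₁ t₂, p.IsPath ∧ t ∈ p.support) ∧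
      ∃ t' : W, BigWitness ψ t' ∧ T.Adj t t'}.ncard ≤
    4 * {t : W | BigWitness ψ t}.ncard := by
  have hB := degreeLeTwoOff_bigWitness hG hT hψ
  exact (CactusLinks.ncard_le_ncard_linkDarts hB).trans (CactusLinks.ncard_linkDarts_le hT hB)

/-- In a 2-connected graph contractible to a cactus `T`, at most `4 |T_B|` vertices of `T`
lie on a path between two distinct vertices of `T_B` and are adjacent to a vertex of
`T_B`, where `T_B` is the set of vertices with big witness sets. -/
theorem stmt5 {V : Type u} {W : Type v} [Fintype V] [Fintype W]
    (G : SimpleGraph V) (T : SimpleGraph W) (hG : TwoConnected G) (hT : IsCactus T)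
    (ψ : V → W) (hψ : IsContraction G T ψ) :
    {t : W | (∃ t₁ t₂ : W, BigWitness ψ t₁ ∧ BigWitness ψ t₂ ∧ t₁ ≠ t₂ ∧
        ∃ p : T.Walk t₁ t₂, p.IsPath ∧ t ∈ p.support) ∧
      ∃ t' : W, BigWitness ψ t' ∧ T.Adj t t'}.ncard ≤
    4 * {t : W | BigWitness ψ t}.ncard :=
  stmt5_general G T hG hT ψ hψ
end

section
/- Let H be an (n, 6k)-universal set over a vertex set V of size n, and define the family F of 3-colorings consisting of, for each pair (A, Y) of sets in H, the coloring that maps the vertices in A to color 1, the vertices in Y \ A to color 2, and the vertices in V \ (A ∪ Y) to color 3. Then for every subset S of V with |S| = 6k and every 3-coloring f of V, there exists ψ ∈ F agreeing with f on S. -/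
open SimpleGraph

universe u v

/-- From an `(n, 6k)`-universal set one obtains a family of 3-colourings hitting every
3-colouring on every set of `6k` vertices: for each pair `(A, Y)` of sets of the family,
colour `A` with 1, `Y \ A` with 2 and the rest with 3. -/
theorem stmt18 {V : Type} [Fintype V] [DecidableEq V] (k : ℕ) (H : Finset (Finset V))
    (huniv : ∀ S : Finset V, S.card ≤ 6 * k → ∀ S' ⊆ S, ∃ A ∈ H, S ∩ A = S')
    (S : Finset V) (hS : S.card = 6 * k) (f : V → Fin 3) :
    ∃ A ∈ H, ∃ Y ∈ H, ∀ x ∈ S,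
      (if x ∈ A then (0 : Fin 3) else if x ∈ Y then 1 else 2) = f x := by
  obtain ⟨A, hA, hSA⟩ := huniv S (by omega) (S.filter (fun x => f x = 0)) (Finset.filter_subset _ _)
  obtain ⟨Y, hY, hSY⟩ := huniv S (by omega) (S.filter (fun x => f x ≤ 1)) (Finset.filter_subset _ _)
  refine ⟨A, hA, Y, hY, fun x hx => ?_⟩
  have hAx : x ∈ A ↔ f x = 0 := by
    constructor
    · intro h
      have : x ∈ S.filter (fun x => f x = 0) := hSA ▸ Finset.mem_inter.2 ⟨hx, h⟩
      exact (Finset.mem_filter.1 this).2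
    · intro h
      have : x ∈ S ∩ A := hSA ▸ Finset.mem_filter.2 ⟨hx, h⟩
      exact (Finset.mem_inter.1 this).2
  have hYx : x ∈ Y ↔ f x ≤ 1 := by
    constructor
    · intro h
      have : x ∈ S.filter (fun x => f x ≤ 1) := hSY ▸ Finset.mem_inter.2 ⟨hx, h⟩
      exact (Finset.mem_filter.1 this).2
    · intro h
      have : x ∈ S ∩ Y := hSY ▸ Finset.mem_filter.2 ⟨hx, h⟩
      exact (Finset.mem_inter.1 this).2
  by_cases h0 : x ∈ A
  · simp [h0, (hAx.1 h0).symm]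
  · by_cases h1 : x ∈ Y
    · have h2 := hYx.1 h1
      have hne := (not_iff_not.2 hAx).1 h0
      simp only [h0, if_false, h1, if_true]
      have h3 := (f x).isLt
      apply Fin.ext
      simp only [Fin.le_def, Fin.ext_iff, Fin.val_zero, Fin.val_one] at *
      omega
    · have h2 := (not_iff_not.2 hYx).1 h1
      simp only [h0, if_false, h1, if_false]
      have h3 := (f x).isLt
      apply Fin.ext
      simp only [Fin.le_def, Fin.ext_iff, Fin.val_zero, Fin.val_one] at *
      omega
end
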